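/- arXiv:0902.1518 — 4 statements merged into one kernel-verified Lean document; each statement's English description precedes it below -/
import Mathlib

section
/- Suppose n = r. Then the ideal generated by the images of c_0,…,c_{2n-1} and d_0,…,d_{n-1} in the localization of R at the maximal ideal m = (a_0,…,a_{n-1},b_0,…,b_{n-1}) is the whole maximal ideal m·R_m; in particular the Jacobian matrix of (c_0,…,c_{2n-1},d_0,…,d_{n-1}) evaluated at the origin has rank 2n. (This expresses that the Thom–Boardman symbol TB(I(μ_{n,n})) = (n) = I(n,n).) -/
open MvPolynomial Matrix

noncomputable section

namespace TB

/-- The polynomial ring `ℂ[a_0,…,a_{n-1},b_0,…,b_{r-1}]`: variable `Sum.inl i` is `a_i`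
and `Sum.inr j` is `b_j`. -/
abbrev R (n r : ℕ) : Type := MvPolynomial (Fin n ⊕ Fin r) ℂ

/-- The power series `1 + (cf 1)·t + ⋯ + (cf m)·t^m`. -/
def ser {A : Type*} [CommRing A] (m : ℕ) (cf : ℕ → A) : PowerSeries A :=
  PowerSeries.mk fun k => if k = 0 then 1 else if k ≤ m then cf k else 0

/-- `1 + a_{n-1} t + ⋯ + a_0 t^n`. -/
def Aser (n r : ℕ) : PowerSeries (R n r) :=
  ser n fun k => if h : 1 ≤ k ∧ k ≤ n then X (Sum.inl ⟨n - k, by omega⟩) else 0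

/-- `1 + b_{r-1} t + ⋯ + b_0 t^r`. -/
def Bser (n r : ℕ) : PowerSeries (R n r) :=
  ser r fun k => if h : 1 ≤ k ∧ k ≤ r then X (Sum.inr ⟨r - k, by omega⟩) else 0

/-- `1 + d_{n-1} t + ⋯ + d_0 t^n`. -/
def Dser (n r : ℕ) (d : Fin n → R n r) : PowerSeries (R n r) :=
  ser n fun k => if h : 1 ≤ k ∧ k ≤ n then d ⟨n - k, by omega⟩ else 0

/-- `1 + d_{n-1} t + ⋯ + d_1 t^{n-1}`. -/
def Dhatser (n r : ℕ) (d : Fin n → R n r) : PowerSeries (R n r) :=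
  ser (n - 1) fun k => if h : 1 ≤ k ∧ k ≤ n - 1 then d ⟨n - k, by omega⟩ else 0

/-- `f(x) = x^n + a_{n-1}x^{n-1} + ⋯ + a_0`. -/
def fpoly (n r : ℕ) : Polynomial (R n r) :=
  Polynomial.X ^ n + ∑ i : Fin n, Polynomial.C (X (Sum.inl i)) * Polynomial.X ^ (i : ℕ)

/-- `g(x) = x^r + b_{r-1}x^{r-1} + ⋯ + b_0`. -/
def gpoly (n r : ℕ) : Polynomial (R n r) :=
  Polynomial.X ^ r + ∑ j : Fin r, Polynomial.C (X (Sum.inr j)) * Polynomial.X ^ (j : ℕ)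

/-- The coefficient `c_k` of `f·g`, for `0 ≤ k ≤ n+r-1`. -/
def cc (n r : ℕ) (k : Fin (n + r)) : R n r := (fpoly n r * gpoly n r).coeff (k : ℕ)

/-- `d_0, …, d_{n-1}` are the unique polynomials with
`(1 + b_{r-1}t + ⋯ + b_0 t^r)(1 + d_{n-1}t + ⋯ + d_0 t^n) ≡ 1 + a_{n-1}t + ⋯ + a_0 t^n (mod t^{n+1})`. -/
def dSpec (n r : ℕ) (d : Fin n → R n r) : Prop :=
  ∀ k ≤ n, PowerSeries.coeff k (Bser n r * Dser n r d)
    = PowerSeries.coeff k (Aser n r)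

/-- `ψ_i = d_i` for `0 ≤ i ≤ r-1`, and
`ψ_{s·r+i} = ∂^s d_{r-1} / (∂b_0^{s-1} ∂b_{r-1-i})` for `s ≥ 1`, `0 ≤ i ≤ r-1`. -/
def psi (n r : ℕ) (hr : 0 < r) (hrn : r ≤ n) (d : Fin n → R n r) (m : ℕ) : R n r :=
  if h : m < r then d ⟨m, by omega⟩
  else
    (fun q => pderiv (Sum.inr (⟨0, hr⟩ : Fin r)) q)^[m / r - 1]
      (pderiv (Sum.inr (⟨r - 1 - m % r, by omega⟩ : Fin r)) (d ⟨r - 1, by omega⟩))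

/-- The `m×m` lower shift matrix over `R n r`. -/
def Lmat (n r m : ℕ) : Matrix (Fin m) (Fin m) (R n r) :=
  Matrix.of fun i j => if (i : ℕ) = (j : ℕ) + 1 then 1 else 0

/-- `B = I_n + b_{r-1}L_n + ⋯ + b_0 L_n^r`. -/
def Bmat (n r : ℕ) (hr : 0 < r) : Matrix (Fin n) (Fin n) (R n r) :=
  1 + ∑ k ∈ Finset.range r, (X (Sum.inr (⟨r - 1 - k, by omega⟩ : Fin r)) : R n r) • Lmat n r n ^ (k + 1)

/-- `D̂ = I_n + d_{n-1}L_n + ⋯ + d_1 L_n^{n-1}`. -/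
def Dhat (n r : ℕ) (hn : 0 < n) (d : Fin n → R n r) : Matrix (Fin n) (Fin n) (R n r) :=
  1 + ∑ k ∈ Finset.range (n - 1), d ⟨n - 1 - k, by omega⟩ • Lmat n r n ^ (k + 1)

/-- `D`: the first `r` columns of `D̂`. -/
def Dmat (n r : ℕ) (hn : 0 < n) (hrn : r ≤ n) (d : Fin n → R n r) :
    Matrix (Fin n) (Fin r) (R n r) :=
  (Dhat n r hn d).submatrix id (Fin.castLE hrn)

/-- `Â = I_n + a_{n-1}L_n + ⋯ + a_1 L_n^{n-1}`. -/
def Ahat (n r : ℕ) (hn : 0 < n) : Matrix (Fin n) (Fin n) (R n r) :=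
  1 + ∑ k ∈ Finset.range (n - 1),
    (X (Sum.inl (⟨n - 1 - k, by omega⟩ : Fin n)) : R n r) • Lmat n r n ^ (k + 1)

/-- `A`: the first `r` columns of `Â`. -/
def Amat (n r : ℕ) (hn : 0 < n) (hrn : r ≤ n) : Matrix (Fin n) (Fin r) (R n r) :=
  (Ahat n r hn).submatrix id (Fin.castLE hrn)

/-- The Jacobian matrix of a family `p` of elements of `R n r`: the row of index `i` is
`(∂p_i/∂a_{n-1}, …, ∂p_i/∂a_0, ∂p_i/∂b_{r-1}, …, ∂p_i/∂b_0)`. -/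
def jac {n r : ℕ} {ι : Type*} (p : ι → R n r) : Matrix ι (Fin (n + r)) (R n r) :=
  Matrix.of fun i j =>
    if h : (j : ℕ) < n then pderiv (Sum.inl (⟨n - 1 - (j : ℕ), by omega⟩ : Fin n)) (p i)
    else
      pderiv (Sum.inr (⟨r - 1 - ((j : ℕ) - n), by have := j.isLt; omega⟩ : Fin r)) (p i)

/-- The set of all `k×k` minors of a matrix. -/
def minorsSet {n r : ℕ} {ι : Type*} (k : ℕ) (M : Matrix ι (Fin (n + r)) (R n r)) :
    Set (R n r) :=
  { x | ∃ (ri : Fin k → ι) (ci : Fin k → Fin (n + r)), x = (M.submatrix ri ci).det }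

/-- Evaluation at the origin `a_i = b_j = 0`. -/
def ev0 (n r : ℕ) : R n r →+* ℂ := eval fun _ => 0

/-- The maximal ideal `(a_0,…,a_{n-1},b_0,…,b_{r-1})`. -/
def mIdeal (n r : ℕ) : Ideal (R n r) :=
  Ideal.span (Set.range (X : (Fin n ⊕ Fin r) → R n r))

/-- `1 + g_1 t + ⋯ + g_{r_1} t^{r_1}` over `S = ℂ[g_1,…,g_{r_1},b_0,…,b_{r-1}] = R r1 r`,
where `g_k` is the variable `Sum.inl ⟨k-1⟩`. -/
def Gser (r1 r : ℕ) : PowerSeries (R r1 r) :=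
  ser r1 fun k => if h : 1 ≤ k ∧ k ≤ r1 then X (Sum.inl ⟨k - 1, by omega⟩) else 0

/-- `1 + w_{r-1} t + ⋯ + w_0 t^r`. -/
def Wser (r1 r : ℕ) (w : Fin r → R r1 r) : PowerSeries (R r1 r) :=
  ser r fun k => if h : 1 ≤ k ∧ k ≤ r then w ⟨r - k, by omega⟩ else 0

/-- `1 + w_{r-1} t + ⋯ + w_1 t^{r-1}`. -/
def Whatser (r1 r : ℕ) (w : Fin r → R r1 r) : PowerSeries (R r1 r) :=
  ser (r - 1) fun k => if h : 1 ≤ k ∧ k ≤ r - 1 then w ⟨r - k, by omega⟩ else 0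

/-- `w_0,…,w_{r-1}` are the unique polynomials with
`(1 + g_1 t + ⋯ + g_{r_1}t^{r_1})(1 + w_{r-1}t + ⋯ + w_0 t^r) ≡ 1 + b_{r-1}t + ⋯ + b_0 t^r
(mod t^{r+1})`. -/
def wSpec (r1 r : ℕ) (w : Fin r → R r1 r) : Prop :=
  ∀ k ≤ r, PowerSeries.coeff k (Gser r1 r * Wser r1 r w)
    = PowerSeries.coeff k (Bser r1 r)

/-- `φ'_i = w_i` for `0 ≤ i ≤ r_1-1`, and
`φ'_{s·r_1+i} = ∂^s w_{r_1-1} / (∂g_{r_1}^{s-1} ∂g_{1+i})` for `s ≥ 1`, `0 ≤ i ≤ r_1-1`. -/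
def phi' (r1 r : ℕ) (h1 : 0 < r1) (h2 : r1 < r) (w : Fin r → R r1 r) (m : ℕ) : R r1 r :=
  if h : m < r1 then w ⟨m, by omega⟩
  else
    (fun q => pderiv (Sum.inl (⟨r1 - 1, by omega⟩ : Fin r1)) q)^[m / r1 - 1]
      (pderiv (Sum.inl (⟨m % r1, Nat.mod_lt m h1⟩ : Fin r1)) (w ⟨r1 - 1, by omega⟩))

/-- The substitution `g_k ↦ γ_{n-k}`, `b_j ↦ b_j`, from `S = R r1 r` to `R n r`. -/
def subst (n r r1 : ℕ) (γ : ℕ → R n r) : R r1 r →ₐ[ℂ] R n r :=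
  aeval (Sum.elim (fun i : Fin r1 => γ (n - ((i : ℕ) + 1))) fun j : Fin r => X (Sum.inr j))


/-- From `n = q_1·r + r_1` with `q_1 ≥ 1` we get `r ≤ n`. -/
theorem rle (q1 r r1 n : ℕ) (hq1 : 1 ≤ q1) (hn : n = q1 * r + r1) : r ≤ n := by
  have := Nat.le_mul_of_pos_left r hq1
  omega

/-
Modulo `m²` one has `c_{n+t} ≡ a_t + b_t` and `d_t ≡ a_t - b_t`: in `f·g`, and in the congruence
defining the `d`'s (once these are known to lie in `m`), every product of two non-constant
coefficients lies in `m²`. As `2` is invertible, the `c`'s and `d`'s generate `m` modulo `m²`,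
so Nakayama's lemma in the noetherian local ring `R_m` gives the first claim. The Jacobian at the
origin only sees these linear parts: its rows include `e_{a_t} ± e_{b_t}`, which span `ℂ^{2n}`.
-/

end TB

theorem Submodule.mem_of_add_mem_of_sub_mem {K M : Type*} [Ring K] [Invertible (2 : K)]
    [AddCommGroup M] [Module K M] {W : Submodule K M} {x y : M} (hadd : x + y ∈ W)
    (hsub : x - y ∈ W) : x ∈ W ∧ y ∈ W := by
  have hx : x = (⅟2 : K) • ((x + y) + (x - y)) := by
    rw [add_add_sub_cancel, ← two_smul K x, smul_smul, invOf_mul_self, one_smul]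
  have hy : y = (⅟2 : K) • ((x + y) - (x - y)) := by
    rw [add_sub_sub_cancel, ← two_smul K y, smul_smul, invOf_mul_self, one_smul]
  exact ⟨hx ▸ W.smul_mem _ (add_mem hadd hsub), hy ▸ W.smul_mem _ (sub_mem hadd hsub)⟩

theorem Matrix.rank_eq_card_of_span_row_eq_top {K ι σ : Type*} [Field K] [Fintype ι]
    [Fintype σ] (M : Matrix ι σ K) (h : Submodule.span K (Set.range M.row) = ⊤) :
    M.rank = Fintype.card σ := by
  rw [Matrix.rank_eq_finrank_span_row, h, finrank_top, Module.finrank_fintype_fun_eq_card]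

theorem Ideal.map_atPrime_eq_of_le_sup_sq {A : Type*} [CommRing A] [IsNoetherianRing A]
    (P : Ideal A) [P.IsPrime] {I : Ideal A} (hIP : I ≤ P) (hPI : P ≤ I ⊔ P ^ 2) :
    I.map (algebraMap A (Localization.AtPrime P))
      = P.map (algebraMap A (Localization.AtPrime P)) := by
  set φ := algebraMap A (Localization.AtPrime P)
  refine le_antisymm (Ideal.map_mono hIP) ?_
  have hfg : (P.map φ).FG := IsNoetherian.noetherian _
  refine Submodule.le_of_le_smul_of_le_jacobson_bot (I := P.map φ) hfg ?_ ?_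
  · rw [IsLocalRing.jacobson_eq_maximalIdeal ⊥ bot_ne_top,
      Localization.AtPrime.map_eq_maximalIdeal]
  · rw [Ideal.smul_eq_mul, ← Ideal.map_mul, ← pow_two, ← Ideal.map_sup]
    exact Ideal.map_mono hPI

namespace Polynomial

variable {A : Type*} [CommRing A] {I : Ideal A} {F G : A[X]}

theorem coeff_X_pow_add_mul_X_pow_add_mem (hF : F ∈ I.map C) (hG : G ∈ I.map C) {n m k : ℕ}
    (hk : k ≠ n + m) : ((X ^ n + F) * (X ^ m + G)).coeff k ∈ I := by
  have h : (X ^ n + F) * (X ^ m + G) - X ^ (n + m) ∈ I.map C := by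
    rw [show (X ^ n + F) * (X ^ m + G) - X ^ (n + m) = X ^ n * G + F * (X ^ m + G) by ring]
    exact add_mem (Ideal.mul_mem_left _ _ hG) (Ideal.mul_mem_right _ _ hF)
  simpa [coeff_X_pow, hk] using Ideal.mem_map_C_iff.mp h k

theorem coeff_X_pow_add_mul_X_pow_add_sub_mem_sq (hF : F ∈ I.map C) (hG : G ∈ I.map C)
    {n t : ℕ} (ht : t < n) :
    ((X ^ n + F) * (X ^ n + G)).coeff (n + t) - (F.coeff t + G.coeff t) ∈ I ^ 2 := by
  have hFG : F * G ∈ (I ^ 2).map C := by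
    rw [Ideal.map_pow, pow_two]
    exact Ideal.mul_mem_mul hF hG
  have h : (X ^ n + F) * (X ^ n + G) = X ^ (n + n) + G * X ^ n + F * X ^ n + F * G := by ring
  rw [h, add_comm n t]
  simp only [coeff_add, coeff_X_pow, coeff_mul_X_pow]
  rw [if_neg (by omega), zero_add, show ∀ a b c : A, b + a + c - (a + b) = c by intros; ring]
  exact Ideal.mem_map_C_iff.mp hFG (t + n)

theorem sum_C_mul_X_pow_mem_map_C {m : ℕ} {a : Fin m → A} (ha : ∀ i, a i ∈ I) :
    ∑ i : Fin m, C (a i) * X ^ (i : ℕ) ∈ I.map C :=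
  sum_mem fun i _ => Ideal.mul_mem_right _ _ (Ideal.mem_map_of_mem _ (ha i))

theorem coeff_sum_C_mul_X_pow {m : ℕ} (a : Fin m → A) (i : Fin m) :
    (∑ j : Fin m, C (a j) * X ^ (j : ℕ)).coeff i = a i := by
  simp [Fin.val_inj]

end Polynomial

namespace PowerSeries

variable {A : Type*} [CommRing A] {f g h : A⟦X⟧}

theorem coeff_succ_eq_of_coeff_mul_eq (hf0 : constantCoeff f = 1) (hg0 : constantCoeff g = 1)
    {m : ℕ} (hfg : coeff (m + 1) (f * g) = coeff (m + 1) h) :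
    coeff (m + 1) g = coeff (m + 1) h - coeff (m + 1) f
      - ∑ i ∈ Finset.range m, coeff (i + 1) f * coeff (m - i) g := by
  rw [← hfg, coeff_mul,
    Finset.Nat.sum_antidiagonal_eq_sum_range_succ (fun i j => coeff i f * coeff j g),
    Finset.sum_range_succ, Finset.sum_range_succ']
  simp [hf0, hg0]

theorem coeff_mem_of_coeff_mul_eq (I : Ideal A) (hf0 : constantCoeff f = 1)
    (hg0 : constantCoeff g = 1) {N : ℕ} (hfg : ∀ k ≤ N, coeff k (f * g) = coeff k h)
    (hf : ∀ k, 0 < k → coeff k f ∈ I) (hh : ∀ k, 0 < k → coeff k h ∈ I)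
    {k : ℕ} (hk : 0 < k) (hkN : k ≤ N) : coeff k g ∈ I := by
  obtain ⟨m, rfl⟩ := Nat.exists_eq_add_one_of_ne_zero hk.ne'
  rw [coeff_succ_eq_of_coeff_mul_eq hf0 hg0 (hfg _ hkN)]
  exact sub_mem (sub_mem (hh _ hk) (hf _ hk))
    (sum_mem fun i _ => Ideal.mul_mem_right _ _ (hf _ i.succ_pos))

theorem coeff_sub_mem_sq_of_coeff_mul_eq (I : Ideal A) (hf0 : constantCoeff f = 1)
    (hg0 : constantCoeff g = 1) {N : ℕ} (hfg : ∀ k ≤ N, coeff k (f * g) = coeff k h)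
    (hf : ∀ k, 0 < k → coeff k f ∈ I) (hh : ∀ k, 0 < k → coeff k h ∈ I)
    {k : ℕ} (hk : 0 < k) (hkN : k ≤ N) : coeff k g - (coeff k h - coeff k f) ∈ I ^ 2 := by
  obtain ⟨m, rfl⟩ := Nat.exists_eq_add_one_of_ne_zero hk.ne'
  rw [coeff_succ_eq_of_coeff_mul_eq hf0 hg0 (hfg _ hkN), sub_sub_cancel_left, pow_two]
  refine neg_mem (sum_mem fun i hi => Ideal.mul_mem_mul (hf _ i.succ_pos) ?_)
  have hi : i < m := Finset.mem_range.mp hi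
  exact PowerSeries.coeff_mem_of_coeff_mul_eq I hf0 hg0 hfg hf hh (by omega) (by omega)

end PowerSeries

namespace TB

lemma constantCoeff_ser {A : Type*} [CommRing A] (m : ℕ) (cf : ℕ → A) :
    PowerSeries.constantCoeff (ser m cf) = 1 := by
  simp [ser, ← PowerSeries.coeff_zero_eq_constantCoeff_apply]

lemma coeff_ser_of_pos {A : Type*} [CommRing A] {m k : ℕ} (cf : ℕ → A) (hk : 0 < k) :
    PowerSeries.coeff k (ser m cf) = if k ≤ m then cf k else 0 := by
  simp [ser, hk.ne']

variable {n r : ℕ}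

lemma X_mem_mIdeal (v : Fin n ⊕ Fin r) : (X v : R n r) ∈ mIdeal n r :=
  Ideal.subset_span ⟨v, rfl⟩

lemma coeff_Aser_mem {k : ℕ} (hk : 0 < k) : PowerSeries.coeff k (Aser n r) ∈ mIdeal n r := by
  rw [Aser, coeff_ser_of_pos _ hk]
  split_ifs <;> first | exact X_mem_mIdeal _ | exact zero_mem _

lemma coeff_Bser_mem {k : ℕ} (hk : 0 < k) : PowerSeries.coeff k (Bser n r) ∈ mIdeal n r := by
  rw [Bser, coeff_ser_of_pos _ hk]
  split_ifs <;> first | exact X_mem_mIdeal _ | exact zero_mem _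

lemma coeff_Aser_sub (j : Fin n) : PowerSeries.coeff (n - j) (Aser n r) = X (Sum.inl j) := by
  rw [Aser, coeff_ser_of_pos _ (by omega), if_pos (by omega), dif_pos (by omega)]
  congr 2
  ext
  simp only
  omega

lemma coeff_Bser_sub (j : Fin r) : PowerSeries.coeff (r - j) (Bser n r) = X (Sum.inr j) := by
  rw [Bser, coeff_ser_of_pos _ (by omega), if_pos (by omega), dif_pos (by omega)]
  congr 2
  ext
  simp only
  omega

lemma coeff_Dser_sub (d : Fin n → R n r) (j : Fin n) :
    PowerSeries.coeff (n - j) (Dser n r d) = d j := by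
  rw [Dser, coeff_ser_of_pos _ (by omega), if_pos (by omega), dif_pos (by omega)]
  congr 1
  ext
  simp only
  omega

lemma d_mem {d : Fin n → R n r} (hd : dSpec n r d) (j : Fin n) : d j ∈ mIdeal n r := by
  rw [← coeff_Dser_sub (r := r) d j]
  exact PowerSeries.coeff_mem_of_coeff_mul_eq _ (constantCoeff_ser _ _) (constantCoeff_ser _ _)
    hd (fun _ => coeff_Bser_mem) (fun _ => coeff_Aser_mem) (by omega) (by omega)

lemma d_sub_mem_sq {d : Fin n → R n n} (hd : dSpec n n d) (j : Fin n) :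
    d j - (X (Sum.inl j) - X (Sum.inr j)) ∈ mIdeal n n ^ 2 := by
  have := PowerSeries.coeff_sub_mem_sq_of_coeff_mul_eq (f := Bser n n) (g := Dser n n d)
    (h := Aser n n) _ (constantCoeff_ser _ _) (constantCoeff_ser _ _) hd
    (fun _ => coeff_Bser_mem) (fun _ => coeff_Aser_mem) (k := n - j) (by omega) (by omega)
  rwa [coeff_Dser_sub, coeff_Aser_sub, coeff_Bser_sub] at this

lemma cc_mem (k : Fin (n + r)) : cc n r k ∈ mIdeal n r :=
  Polynomial.coeff_X_pow_add_mul_X_pow_add_mem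
    (Polynomial.sum_C_mul_X_pow_mem_map_C fun _ => X_mem_mIdeal _)
    (Polynomial.sum_C_mul_X_pow_mem_map_C fun _ => X_mem_mIdeal _) k.isLt.ne

lemma cc_sub_mem_sq (t : Fin n) :
    cc n n ⟨n + t, by omega⟩ - (X (Sum.inl t) + X (Sum.inr t)) ∈ mIdeal n n ^ 2 := by
  have hF := Polynomial.sum_C_mul_X_pow_mem_map_C
    (a := fun i : Fin n => (X (Sum.inl i) : R n n)) fun _ => X_mem_mIdeal _
  have hG := Polynomial.sum_C_mul_X_pow_mem_map_C
    (a := fun i : Fin n => (X (Sum.inr i) : R n n)) fun _ => X_mem_mIdeal _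
  have := Polynomial.coeff_X_pow_add_mul_X_pow_add_sub_mem_sq hF hG t.isLt
  rwa [Polynomial.coeff_sum_C_mul_X_pow, Polynomial.coeff_sum_C_mul_X_pow] at this

def gradientAtOrigin (n r : ℕ) : R n r →ₗ[ℂ] Fin n ⊕ Fin r → ℂ where
  toFun p v := ev0 n r (pderiv v p)
  map_add' p q := by ext; simp
  map_smul' c p := by ext; simp [ev0, smul_eq_C_mul]

lemma ev0_eq_zero_of_mem {p : R n r} (hp : p ∈ mIdeal n r) : ev0 n r p = 0 := by
  have hle : mIdeal n r ≤ RingHom.ker (ev0 n r) := by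
    rw [mIdeal, Ideal.span_le]
    rintro _ ⟨v, rfl⟩
    simp [ev0]
  exact hle hp

lemma gradientAtOrigin_eq_zero_of_mem_sq {p : R n r} (hp : p ∈ mIdeal n r ^ 2) :
    gradientAtOrigin n r p = 0 := by
  rw [pow_two] at hp
  induction hp using Submodule.mul_induction_on' with
  | mem_mul_mem x hx y hy =>
    ext v
    simp [gradientAtOrigin, ev0_eq_zero_of_mem hx, ev0_eq_zero_of_mem hy]
  | add x _ y _ hx hy => rw [map_add, hx, hy, add_zero]

lemma gradientAtOrigin_eq_of_sub_mem_sq {p q : R n r} (h : p - q ∈ mIdeal n r ^ 2) :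
    gradientAtOrigin n r p = gradientAtOrigin n r q :=
  sub_eq_zero.mp (map_sub (gradientAtOrigin n r) p q ▸ gradientAtOrigin_eq_zero_of_mem_sq h)

lemma gradientAtOrigin_X (v : Fin n ⊕ Fin r) : gradientAtOrigin n r (X v) = Pi.single v 1 := by
  ext w
  simp [gradientAtOrigin, pderiv_X, ev0, Pi.single_apply, eq_comm]

def jacobianVar (n r : ℕ) : Fin (n + r) ≃ Fin n ⊕ Fin r :=
  finSumFinEquiv.symm.trans (Equiv.sumCongr Fin.revPerm Fin.revPerm)

lemma jac_map_ev0 {ι : Type*} (p : ι → R n r) :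
    (jac p).map (ev0 n r)
      = (Matrix.of fun i => gradientAtOrigin n r (p i)).submatrix id (jacobianVar n r) := by
  ext i j
  induction j using Fin.addCases <;>
    simp [jac, jacobianVar, gradientAtOrigin, Fin.rev, Nat.sub_sub, Nat.add_comm 1]

lemma span_le_mIdeal {d : Fin n → R n r} (hd : dSpec n r d) :
    Ideal.span (Set.range (cc n r) ∪ Set.range d) ≤ mIdeal n r := by
  rw [Ideal.span_le]
  rintro _ (⟨k, rfl⟩ | ⟨j, rfl⟩)
  exacts [cc_mem k, d_mem hd j]

lemma mIdeal_le_span_sup_sq {d : Fin n → R n n} (hd : dSpec n n d) :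
    mIdeal n n ≤ Ideal.span (Set.range (cc n n) ∪ Set.range d) ⊔ mIdeal n n ^ 2 := by
  set J := Ideal.span (Set.range (cc n n) ∪ Set.range d) ⊔ mIdeal n n ^ 2
  have hX (t : Fin n) : X (Sum.inl t) ∈ J ∧ X (Sum.inr t) ∈ J := by
    have hc : cc n n ⟨n + t, by omega⟩ ∈ J := Ideal.mem_sup_left (Ideal.subset_span (by simp))
    have hdt : d t ∈ J := Ideal.mem_sup_left (Ideal.subset_span (by simp))
    have hadd := sub_mem hc (Ideal.mem_sup_right (cc_sub_mem_sq t))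
    have hsub := sub_mem hdt (Ideal.mem_sup_right (d_sub_mem_sq hd t))
    rw [sub_sub_cancel] at hadd hsub
    exact Submodule.mem_of_add_mem_of_sub_mem (W := J.restrictScalars ℂ) hadd hsub
  rw [mIdeal, Ideal.span_le]
  rintro _ ⟨t | t, rfl⟩
  exacts [(hX t).1, (hX t).2]

lemma span_gradientAtOrigin_eq_top {d : Fin n → R n n} (hd : dSpec n n d) :
    Submodule.span ℂ (Set.range fun i => gradientAtOrigin n n (Sum.elim (cc n n) d i)) = ⊤ := by
  set W := Submodule.span ℂ (Set.range fun i => gradientAtOrigin n n (Sum.elim (cc n n) d i))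
  have hrow (i) : gradientAtOrigin n n (Sum.elim (cc n n) d i) ∈ W :=
    Submodule.subset_span (Set.mem_range_self i)
  have hsingle (t : Fin n) : Pi.single (Sum.inl t) 1 ∈ W ∧ Pi.single (Sum.inr t) 1 ∈ W := by
    have hadd := hrow (Sum.inl ⟨n + t, by omega⟩)
    have hsub := hrow (Sum.inr t)
    rw [Sum.elim_inl, gradientAtOrigin_eq_of_sub_mem_sq (cc_sub_mem_sq t), map_add,
      gradientAtOrigin_X, gradientAtOrigin_X] at hadd
    rw [Sum.elim_inr, gradientAtOrigin_eq_of_sub_mem_sq (d_sub_mem_sq hd t), map_sub,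
      gradientAtOrigin_X, gradientAtOrigin_X] at hsub
    exact Submodule.mem_of_add_mem_of_sub_mem hadd hsub
  rw [eq_top_iff, ← (Pi.basisFun ℂ _).span_eq, Submodule.span_le]
  rintro _ ⟨t | t, rfl⟩ <;> rw [SetLike.mem_coe, Pi.basisFun_apply]
  exacts [(hsingle t).1, (hsingle t).2]

theorem stmt1_general (n : ℕ)
    (d : Fin n → R n n) (hd : dSpec n n d)
    [hm : (mIdeal n n).IsPrime] :
    Ideal.span ((algebraMap (R n n) (Localization.AtPrime (mIdeal n n))) ''
        (Set.range (cc n n) ∪ Set.range d))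
      = Ideal.map (algebraMap (R n n) (Localization.AtPrime (mIdeal n n))) (mIdeal n n)
    ∧ ((jac (Sum.elim (cc n n) d)).map (ev0 n n)).rank = 2 * n := by
  refine ⟨?_, ?_⟩
  · rw [← Ideal.map_span]
    exact Ideal.map_atPrime_eq_of_le_sup_sq _ (span_le_mIdeal hd) (mIdeal_le_span_sup_sq hd)
  · rw [jac_map_ev0]
    calc _ = (Matrix.of fun i => gradientAtOrigin n n (Sum.elim (cc n n) d i)).rank :=
          Matrix.rank_submatrix _ (Equiv.refl _) _
      _ = Fintype.card (Fin n ⊕ Fin n) :=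
          Matrix.rank_eq_card_of_span_row_eq_top _ (span_gradientAtOrigin_eq_top hd)
      _ = 2 * n := by simp [two_mul]

/-- Corollary 2.2: in the case `n = r`, the ideal generated by the images of
the `c`'s and `d`'s in the localization of `R` at the maximal ideal `m = (a_i, b_j)` is all of
`m·R_m`, and the Jacobian of `(c_0,…,c_{2n-1},d_0,…,d_{n-1})` at the origin has rank `2n`. -/
theorem stmt1 (n : ℕ) (hn : 1 ≤ n)
    (d : Fin n → R n n) (hd : dSpec n n d)
    [hm : (mIdeal n n).IsPrime] :
    Ideal.span ((algebraMap (R n n) (Localization.AtPrime (mIdeal n n))) ''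
        (Set.range (cc n n) ∪ Set.range d))
      = Ideal.map (algebraMap (R n n) (Localization.AtPrime (mIdeal n n))) (mIdeal n n)
    ∧ ((jac (Sum.elim (cc n n) d)).map (ev0 n n)).rank = 2 * n :=
  stmt1_general n d hd (hm := hm)

end TB
end
end

section
/- Let P be the n×n matrix over R with (i,j)-entry ∂d_{n-1-i}/∂a_{n-1-j} and Q the n×r matrix with (i,j)-entry ∂d_{n-1-i}/∂b_{r-1-j} (indices 0-based). Then B·P = I_n and B·Q + D = 0. Moreover A = B·D, where A is the n×r matrix formed by the first r columns of I_n + a_{n-1}L_n + ⋯ + a_1 L_n^{n-1}. -/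
open MvPolynomial Matrix

noncomputable section

namespace TB

/-!
`B`, `D̂` and `Â` are the lower triangular Toeplitz matrices of the series `B(t)`, `D(t)`, `A(t)`,
and such a matrix acts on a column, read as a series truncated mod `t^n`, by multiplication. Hence
`B·D̂ = Â` is the defining congruence `B(t)D(t) ≡ A(t)`. Writing `D(t) = 1 + t·T(t)` with
`T(t) = d_{n-1} + d_{n-2} t + ⋯ + d_0 t^{n-1}` and differentiating the congruence coefficientwise
gives `∂B·D + t·B·∂T ≡ ∂A (mod t^{n+1})`. For `∂ = ∂/∂a_{n-1-j}` we have `∂B = 0`, `∂A = t^{j+1}`,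
so `B·∂T ≡ t^j`; for `∂ = ∂/∂b_{r-1-j}` we have `∂A = 0`, `∂B = t^{j+1}`, so `B·∂T ≡ -t^j D(t)`
(mod `t^n`). These are the columns of `B·P = I` and `B·Q = -D`.
-/

open scoped PowerSeries

section Toeplitz

variable {A : Type*} [CommRing A]

/-- Multiplication by `f` on `A⟦X⟧ ⧸ (X ^ m)` in the basis `1, X, …, X ^ (m - 1)`. -/
def lowerToeplitz (m : ℕ) : A⟦X⟧ →ₗ[A] Matrix (Fin m) (Fin m) A where
  toFun f := of fun i j => PowerSeries.coeff i (PowerSeries.X ^ (j : ℕ) * f)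
  map_add' f g := by ext; simp [mul_add]
  map_smul' a f := by ext; simp

lemma lowerToeplitz_apply (m : ℕ) (f : A⟦X⟧) (i j : Fin m) :
    lowerToeplitz m f i j = PowerSeries.coeff i (PowerSeries.X ^ (j : ℕ) * f) :=
  rfl

lemma lowerToeplitz_mul_of_coeff {m : ℕ} {ι : Type*} (f : A⟦X⟧) (g : ι → A⟦X⟧) :
    lowerToeplitz m f * of (fun (i : Fin m) j => PowerSeries.coeff i (g j))
      = of fun (i : Fin m) j => PowerSeries.coeff i (f * g j) := by
  ext i j
  simp only [mul_apply, lowerToeplitz_apply, of_apply, PowerSeries.coeff_X_pow_mul']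
  rw [mul_comm f, PowerSeries.coeff_mul, Finset.Nat.sum_antidiagonal_eq_sum_range_succ_mk,
    Fin.sum_univ_eq_sum_range (fun l => (if l ≤ (i : ℕ) then PowerSeries.coeff (i - l) f else 0)
      * PowerSeries.coeff l (g j)), ← Finset.sum_range_add_sum_Ico _ (Nat.succ_le_of_lt i.isLt)]
  rw [Finset.sum_eq_zero (s := Finset.Ico _ _) fun l hl => by
    rw [if_neg (by simp at hl; omega), zero_mul], add_zero]
  refine Finset.sum_congr rfl fun l hl => ?_
  rw [if_pos (by simp at hl; omega), mul_comm]

lemma lowerToeplitz_mul (m : ℕ) (f g : A⟦X⟧) :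
    lowerToeplitz m f * lowerToeplitz m g = lowerToeplitz m (f * g) := by
  refine (lowerToeplitz_mul_of_coeff f fun j : Fin m => PowerSeries.X ^ (j : ℕ) * g).trans ?_
  ext i j
  simp only [lowerToeplitz_apply, of_apply, mul_left_comm f]

lemma lowerToeplitz_congr {m : ℕ} {f g : A⟦X⟧}
    (h : ∀ k < m, PowerSeries.coeff k f = PowerSeries.coeff k g) :
    lowerToeplitz m f = lowerToeplitz m g := by
  ext i j
  simp only [lowerToeplitz_apply, PowerSeries.coeff_X_pow_mul']
  split_ifs
  · exact h _ (by omega)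
  · rfl

end Toeplitz

section CoeffDeriv

variable {S A : Type*} [CommSemiring S] [CommRing A] [Algebra S A]

def coeffDeriv (δ : Derivation S A A) (f : A⟦X⟧) : A⟦X⟧ :=
  PowerSeries.mk fun k => δ (PowerSeries.coeff k f)

@[simp]
lemma coeff_coeffDeriv (δ : Derivation S A A) (f : A⟦X⟧) (k : ℕ) :
    PowerSeries.coeff k (coeffDeriv δ f) = δ (PowerSeries.coeff k f) :=
  PowerSeries.coeff_mk _ _

lemma coeffDeriv_mul (δ : Derivation S A A) (f g : A⟦X⟧) :
    coeffDeriv δ (f * g) = coeffDeriv δ f * g + f * coeffDeriv δ g := by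
  ext k
  simp only [coeff_coeffDeriv, map_add, PowerSeries.coeff_mul, map_sum, Derivation.leibniz,
    smul_eq_mul]
  rw [← Finset.sum_add_distrib]
  exact Finset.sum_congr rfl fun _ _ => by ring

end CoeffDeriv

lemma ser_eq_one_add_sum {A : Type*} [CommRing A] (m : ℕ) (cf : ℕ → A) :
    ser m cf = 1 + ∑ k ∈ Finset.range m, cf (k + 1) • PowerSeries.X ^ (k + 1) := by
  ext (_ | t)
  · simp [ser]
  · simp [ser, PowerSeries.coeff_X_pow]

section ShiftMatrix

variable {n r : ℕ}

lemma lowerToeplitz_X (m : ℕ) : lowerToeplitz m (PowerSeries.X : (R n r)⟦X⟧) = Lmat n r m := by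
  ext i j
  simp [lowerToeplitz_apply, Lmat, ← pow_succ, PowerSeries.coeff_X_pow]

lemma lowerToeplitz_X_pow (m p : ℕ) :
    lowerToeplitz m (PowerSeries.X ^ p : (R n r)⟦X⟧) = Lmat n r m ^ p := by
  induction p with
  | zero =>
    ext i j
    simp [lowerToeplitz_apply, PowerSeries.coeff_X_pow, one_apply, Fin.ext_iff]
  | succ p ih => rw [pow_succ, ← lowerToeplitz_mul, ih, lowerToeplitz_X, pow_succ]

lemma lowerToeplitz_ser (m s : ℕ) (cf : ℕ → R n r) :
    lowerToeplitz m (ser s cf) = 1 + ∑ k ∈ Finset.range s, cf (k + 1) • Lmat n r m ^ (k + 1) := by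
  rw [ser_eq_one_add_sum, map_add, map_sum, ← pow_zero PowerSeries.X, lowerToeplitz_X_pow,
    pow_zero]
  simp only [map_smul, lowerToeplitz_X_pow]

lemma Bmat_eq_lowerToeplitz (hr : 0 < r) : Bmat n r hr = lowerToeplitz n (Bser n r) := by
  rw [Bser, lowerToeplitz_ser, Bmat]
  refine congrArg _ (Finset.sum_congr rfl fun k hk => ?_)
  rw [Finset.mem_range] at hk
  rw [dif_pos (by omega)]
  congr 4
  omega

lemma lowerToeplitz_ser_of_le (m s : ℕ) (cf : ℕ → R n r) (hms : m ≤ s + 1) :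
    lowerToeplitz m (ser s cf)
      = 1 + ∑ k ∈ Finset.range (m - 1), cf (k + 1) • Lmat n r m ^ (k + 1) := by
  rw [← lowerToeplitz_ser]
  refine lowerToeplitz_congr fun k hk => ?_
  simp only [ser, PowerSeries.coeff_mk]
  split_ifs <;> first | rfl | omega

lemma Ahat_eq_lowerToeplitz (hn : 0 < n) : Ahat n r hn = lowerToeplitz n (Aser n r) := by
  rw [Aser, lowerToeplitz_ser_of_le _ _ _ (by omega), Ahat]
  refine congrArg _ (Finset.sum_congr rfl fun k hk => ?_)
  rw [Finset.mem_range] at hk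
  rw [dif_pos (by omega)]
  congr 4
  omega

lemma Dhat_eq_lowerToeplitz (hn : 0 < n) (d : Fin n → R n r) :
    Dhat n r hn d = lowerToeplitz n (Dser n r d) := by
  rw [Dser, lowerToeplitz_ser_of_le _ _ _ (by omega), Dhat]
  refine congrArg _ (Finset.sum_congr rfl fun k hk => ?_)
  rw [Finset.mem_range] at hk
  rw [dif_pos (by omega)]
  congr 3
  omega

end ShiftMatrix

section Derivatives

variable {n r : ℕ}

lemma coeffDeriv_inl_Aser (x : Fin n) :
    coeffDeriv (pderiv (Sum.inl x)) (Aser n r) = PowerSeries.X ^ (n - x) := by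
  obtain ⟨x, hx⟩ := x
  refine PowerSeries.ext fun k => ?_
  simp only [coeff_coeffDeriv, Aser, ser, PowerSeries.coeff_mk, PowerSeries.coeff_X_pow]
  split_ifs <;> simp [pderiv_X, Pi.single_apply, Fin.ext_iff] <;> omega

lemma coeffDeriv_inr_Aser (y : Fin r) : coeffDeriv (pderiv (Sum.inr y)) (Aser n r) = 0 := by
  refine PowerSeries.ext fun k => ?_
  simp only [coeff_coeffDeriv, Aser, ser, PowerSeries.coeff_mk]
  split_ifs <;> simp [pderiv_X]

lemma coeffDeriv_inl_Bser (x : Fin n) : coeffDeriv (pderiv (Sum.inl x)) (Bser n r) = 0 := by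
  refine PowerSeries.ext fun k => ?_
  simp only [coeff_coeffDeriv, Bser, ser, PowerSeries.coeff_mk]
  split_ifs <;> simp [pderiv_X]

lemma coeffDeriv_inr_Bser (y : Fin r) :
    coeffDeriv (pderiv (Sum.inr y)) (Bser n r) = PowerSeries.X ^ (r - y) := by
  obtain ⟨y, hy⟩ := y
  refine PowerSeries.ext fun k => ?_
  simp only [coeff_coeffDeriv, Bser, ser, PowerSeries.coeff_mk, PowerSeries.coeff_X_pow]
  split_ifs <;> simp [pderiv_X, Pi.single_apply, Fin.ext_iff] <;> omega

end Derivatives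

section Solution

variable {n r : ℕ}

def Dtail (n r : ℕ) (d : Fin n → R n r) : (R n r)⟦X⟧ :=
  PowerSeries.mk fun k => if h : k < n then d ⟨n - 1 - k, by omega⟩ else 0

lemma coeff_Dtail (d : Fin n → R n r) (i : Fin n) :
    PowerSeries.coeff i (Dtail n r d) = d ⟨n - 1 - i, by omega⟩ := by
  simp [Dtail]

lemma Dser_eq_one_add_X_mul_Dtail (d : Fin n → R n r) :
    Dser n r d = 1 + PowerSeries.X * Dtail n r d := by
  refine PowerSeries.ext fun k => ?_
  rcases k with _ | k
  · simp [Dser, ser]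
  · simp only [Dser, Dtail, ser, map_add, PowerSeries.coeff_one, PowerSeries.coeff_succ_X_mul,
      PowerSeries.coeff_mk, Nat.succ_ne_zero, if_false, zero_add]
    split_ifs <;> first | rfl | omega | (congr 2; omega)

lemma coeffDeriv_Dser (δ : Derivation ℂ (R n r) (R n r)) (d : Fin n → R n r) :
    coeffDeriv δ (Dser n r d) = PowerSeries.X * coeffDeriv δ (Dtail n r d) := by
  refine PowerSeries.ext fun k => ?_
  rcases k with _ | k
  · simp [Dser, ser]
  · simp [Dser_eq_one_add_X_mul_Dtail, PowerSeries.coeff_succ_X_mul]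

end Solution

namespace dSpec

variable {n r : ℕ} {d : Fin n → R n r}

lemma deriv (hd : dSpec n r d) (δ : Derivation ℂ (R n r) (R n r)) {i : ℕ} (hi : i < n) :
    PowerSeries.coeff (i + 1) (coeffDeriv δ (Bser n r) * Dser n r d)
        + PowerSeries.coeff i (Bser n r * coeffDeriv δ (Dtail n r d))
      = PowerSeries.coeff (i + 1) (coeffDeriv δ (Aser n r)) := by
  have h := congrArg δ (hd (i + 1) hi)
  rwa [← coeff_coeffDeriv, ← coeff_coeffDeriv, coeffDeriv_mul, coeffDeriv_Dser, mul_left_comm,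
    map_add, PowerSeries.coeff_succ_X_mul] at h

lemma coeff_Bser_mul_coeffDeriv_inl_Dtail (hd : dSpec n r d) (l : Fin n) {i : ℕ} (hi : i < n) :
    PowerSeries.coeff i
        (Bser n r * coeffDeriv (pderiv (Sum.inl ⟨n - 1 - l, by omega⟩)) (Dtail n r d))
      = PowerSeries.coeff i (PowerSeries.X ^ (l : ℕ)) := by
  have h := hd.deriv (pderiv (Sum.inl ⟨n - 1 - l, by omega⟩)) hi
  rwa [coeffDeriv_inl_Bser, zero_mul, map_zero, zero_add, coeffDeriv_inl_Aser,
    show n - (n - 1 - l) = l + 1 by omega, pow_succ', PowerSeries.coeff_succ_X_mul] at h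

lemma coeff_Bser_mul_coeffDeriv_inr_Dtail (hd : dSpec n r d) (j : Fin r) {i : ℕ} (hi : i < n) :
    PowerSeries.coeff i
        (Bser n r * coeffDeriv (pderiv (Sum.inr ⟨r - 1 - j, by omega⟩)) (Dtail n r d))
      + PowerSeries.coeff i (PowerSeries.X ^ (j : ℕ) * Dser n r d) = 0 := by
  have h := hd.deriv (pderiv (Sum.inr ⟨r - 1 - j, by omega⟩)) hi
  rwa [coeffDeriv_inr_Aser, map_zero, coeffDeriv_inr_Bser, show r - (r - 1 - j) = j + 1 by omega,
    pow_succ', mul_assoc, PowerSeries.coeff_succ_X_mul, add_comm] at h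

lemma Bmat_mul_Dhat (hd : dSpec n r d) (hr : 0 < r) (hn : 0 < n) :
    Bmat n r hr * Dhat n r hn d = Ahat n r hn := by
  rw [Bmat_eq_lowerToeplitz, Dhat_eq_lowerToeplitz, Ahat_eq_lowerToeplitz, lowerToeplitz_mul]
  exact lowerToeplitz_congr fun k hk => hd k hk.le

end dSpec

/-- Equation (3.3) and `A = BD`: `B·P = I_n`, `B·Q + D = 0`, and `A = B·D`,
where `P_{ij} = ∂d_{n-1-i}/∂a_{n-1-j}` and `Q_{ij} = ∂d_{n-1-i}/∂b_{r-1-j}`. -/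
theorem stmt2 (n r : ℕ) (hr : 1 ≤ r) (hrn : r ≤ n)
    (d : Fin n → R n r) (hd : dSpec n r d) :
    Bmat n r hr * (Matrix.of fun i j : Fin n =>
        pderiv (Sum.inl (⟨n - 1 - (j : ℕ), by omega⟩ : Fin n)) (d ⟨n - 1 - (i : ℕ), by omega⟩)) = 1
    ∧ Bmat n r hr * (Matrix.of fun (i : Fin n) (j : Fin r) =>
        pderiv (Sum.inr (⟨r - 1 - (j : ℕ), by omega⟩ : Fin r)) (d ⟨n - 1 - (i : ℕ), by omega⟩))
        + Dmat n r (by omega) hrn d = 0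
    ∧ Amat n r (by omega) hrn = Bmat n r hr * Dmat n r (by omega) hrn d := by
  have hn : 0 < n := by omega
  -- the columns of `P` and `Q` become coefficient vectors of derivatives of `Dtail`
  simp only [← coeff_Dtail d, ← coeff_coeffDeriv]
  refine ⟨?_, ?_, ?_⟩
  · rw [Bmat_eq_lowerToeplitz, lowerToeplitz_mul_of_coeff]
    ext i j : 1
    rw [of_apply, hd.coeff_Bser_mul_coeffDeriv_inl_Dtail j i.isLt, PowerSeries.coeff_X_pow,
      one_apply]
    simp only [Fin.val_inj]
  · rw [Bmat_eq_lowerToeplitz, lowerToeplitz_mul_of_coeff]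
    ext i j : 1
    rw [Matrix.add_apply, of_apply, Dmat, submatrix_apply, Dhat_eq_lowerToeplitz,
      lowerToeplitz_apply]
    exact hd.coeff_Bser_mul_coeffDeriv_inr_Dtail j i.isLt
  · rw [Amat, ← hd.Bmat_mul_Dhat hr hn]
    rfl

end TB
end
end

section
/- For every 0 ≤ s ≤ q_1−1, the r×r matrix with (i,j)-entry ∂ψ_{sr+i}/∂b_{r-1-j} equals −(s+1) times the product of the r×n matrix with (i,j)-entry ∂ψ_{sr+i}/∂a_{n-1-j} with the matrix D (indices 0-based). -/
/-!
Put `E = B(t)⁻¹` in `R⟦t⟧`. The defining congruence of the `d_i` says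
`D(t) ≡ A(t) E (mod t^{n+1})`, so `d_i = [t^n] t^i A E`. Differentiating coefficientwise, with
`∂B/∂b_w = t^{r-w}`, `∂A/∂a_w = t^{n-w}` and `∂E = -E² ∂B`, gives by induction
`ψ_{sr+i} = (-1)^s s! [t^n] t^{sr+i} A E^{s+1}`. Hence `∂ψ_{sr+i}/∂b_{r-1-j}` is
`-(s+1)(-1)^s s! [t^n] t^{sr+i+j+1} A E^{s+2}`, while `∂ψ_{sr+i}/∂a_{n-1-l}` is
`(-1)^s s! [t^n] t^{sr+i+l+1} E^{s+1}`. The `(l, j)` entry of `D` is `[t^{l-j}] D(t)`, so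
multiplying the second row by `D` convolves it with `D(t) ≡ A E`, which yields the first.
-/

open MvPolynomial Matrix

noncomputable section

namespace Derivation

variable {R A : Type*} [CommRing R] [CommRing A] [Algebra R A] (D : Derivation R A A)

def mapPowerSeries : Derivation R (PowerSeries A) (PowerSeries A) :=
  Derivation.mk'
    { toFun := fun F => PowerSeries.mk fun k => D (PowerSeries.coeff k F)
      map_add' := fun F G => by ext; simp
      map_smul' := fun c F => by ext; simp }
    fun F G => by
      ext k
      simp only [LinearMap.coe_mk, AddHom.coe_mk, PowerSeries.coeff_mk, smul_eq_mul,
        PowerSeries.coeff_mul, map_sum, leibniz, Finset.sum_add_distrib, map_add]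
      rw [← Finset.Nat.sum_antidiagonal_swap (f := fun p => PowerSeries.coeff p.1 G * _)]
      rfl

@[simp]
theorem coeff_mapPowerSeries (F : PowerSeries A) (k : ℕ) :
    PowerSeries.coeff k (D.mapPowerSeries F) = D (PowerSeries.coeff k F) := by
  simp [mapPowerSeries]

@[simp]
theorem mapPowerSeries_X_pow (p : ℕ) :
    D.mapPowerSeries (PowerSeries.X ^ p : PowerSeries A) = 0 := by
  ext k
  simp only [coeff_mapPowerSeries, PowerSeries.coeff_X_pow, apply_ite D, map_one_eq_zero, map_zero,
    ite_self]

end Derivation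

namespace PowerSeries

variable {A : Type*} [CommRing A]

theorem coeff_mul_eq_of_coeff_eq {F G : A⟦X⟧} {N : ℕ} (h : ∀ k ≤ N, coeff k F = coeff k G)
    (H : A⟦X⟧) : coeff N (H * F) = coeff N (H * G) := by
  simp only [coeff_mul]
  refine Finset.sum_congr rfl fun p hp => ?_
  rw [h p.2 (by rw [Finset.HasAntidiagonal.mem_antidiagonal] at hp; omega)]

theorem coeff_X_pow_mul_mul_eq_sum (F G : A⟦X⟧) {n j : ℕ} (hj : j ≤ n) :
    coeff n (X ^ j * (F * G)) =
      ∑ l ∈ Finset.range (n + 1),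
        (if j ≤ l then coeff (l - j) F else 0) * coeff (n - l) G := by
  rw [coeff_X_pow_mul', if_pos hj, coeff_mul, Finset.Nat.sum_antidiagonal_eq_sum_range_succ_mk,
    show n + 1 = j + (n - j + 1) by omega, Finset.sum_range_add,
    Finset.sum_eq_zero (s := Finset.range j) fun l hl => by
      rw [if_neg (by simpa using hl), zero_mul], zero_add]
  refine Finset.sum_congr rfl fun a _ => ?_
  rw [if_pos (by omega), Nat.add_sub_cancel_left, Nat.sub_sub]

end PowerSeries

namespace TB

theorem coeff_ser {A : Type*} [CommRing A] (m : ℕ) (cf : ℕ → A) (k : ℕ) :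
    PowerSeries.coeff k (ser m cf) = if k = 0 then 1 else if k ≤ m then cf k else 0 :=
  PowerSeries.coeff_mk _ _

section VarSeries

variable {σ K : Type*} [CommRing K] {m : ℕ}

def varSeries (ι : Fin m → σ) : PowerSeries (MvPolynomial σ K) :=
  ser m fun k => if h : 1 ≤ k ∧ k ≤ m then X (ι ⟨m - k, by omega⟩) else 0

theorem Aser_eq_varSeries (n r : ℕ) : Aser n r = varSeries Sum.inl := rfl

theorem Bser_eq_varSeries (n r : ℕ) : Bser n r = varSeries Sum.inr := rfl

theorem coeff_mapPowerSeries_varSeries (D : Derivation K (MvPolynomial σ K) (MvPolynomial σ K))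
    (ι : Fin m → σ) (k : ℕ) :
    PowerSeries.coeff k (D.mapPowerSeries (varSeries ι)) =
      if h : 1 ≤ k ∧ k ≤ m then D (X (ι ⟨m - k, by omega⟩)) else 0 := by
  rw [Derivation.coeff_mapPowerSeries, varSeries, coeff_ser]
  by_cases h : 1 ≤ k ∧ k ≤ m
  · rw [dif_pos h, if_neg (by omega), if_pos h.2, dif_pos h]
  · rw [dif_neg h]
    split_ifs <;> simp

theorem mapPowerSeries_pderiv_varSeries_self {ι : Fin m → σ} (hι : ι.Injective) (w : Fin m) :
    (pderiv (ι w)).mapPowerSeries (varSeries (K := K) ι) = PowerSeries.X ^ (m - w) := by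
  classical
  refine PowerSeries.ext fun k => ?_
  rw [coeff_mapPowerSeries_varSeries, PowerSeries.coeff_X_pow]
  simp only [pderiv_X, Pi.single_apply, hι.eq_iff, Fin.ext_iff]
  split_ifs <;> first | rfl | omega

theorem mapPowerSeries_pderiv_varSeries_of_ne {ι : Fin m → σ} {v : σ}
    (hv : ∀ w, ι w ≠ v) :
    (pderiv v).mapPowerSeries (varSeries (K := K) ι) = 0 := by
  refine PowerSeries.ext fun k => ?_
  rw [coeff_mapPowerSeries_varSeries]
  split_ifs
  · exact pderiv_X_of_ne (hv _)
  · rfl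

end VarSeries

section Series

variable {n r : ℕ}

open PowerSeries in
def BserInv (n r : ℕ) : PowerSeries (R n r) := invOfUnit (Bser n r) 1

theorem BserInv_mul_Bser : BserInv n r * Bser n r = 1 := by
  rw [mul_comm]
  refine PowerSeries.mul_invOfUnit _ _ ?_
  rw [← PowerSeries.coeff_zero_eq_constantCoeff_apply, Bser, coeff_ser, if_pos rfl, Units.val_one]

theorem mapPowerSeries_pderiv_inl_BserInv (w : Fin n) :
    (pderiv (Sum.inl w)).mapPowerSeries (BserInv n r) = 0 := by
  rw [Derivation.leibniz_of_mul_eq_one _ BserInv_mul_Bser, Bser_eq_varSeries,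
    mapPowerSeries_pderiv_varSeries_of_ne (fun _ => Sum.inr_ne_inl), smul_zero]

theorem mapPowerSeries_pderiv_inr_BserInv (w : Fin r) :
    (pderiv (Sum.inr w)).mapPowerSeries (BserInv n r) =
      -(BserInv n r ^ 2 * PowerSeries.X ^ (r - w)) := by
  rw [Derivation.leibniz_of_mul_eq_one _ BserInv_mul_Bser, Bser_eq_varSeries,
    mapPowerSeries_pderiv_varSeries_self Sum.inr_injective, smul_eq_mul, neg_mul]

theorem mapPowerSeries_pderiv_inl (w : Fin n) (p k : ℕ) :
    (pderiv (Sum.inl w)).mapPowerSeries (PowerSeries.X ^ p * Aser n r * BserInv n r ^ (k + 1)) =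
      PowerSeries.X ^ (p + (n - w)) * BserInv n r ^ (k + 1) := by
  rw [Derivation.leibniz, Derivation.leibniz, Derivation.mapPowerSeries_X_pow,
    Derivation.leibniz_pow, mapPowerSeries_pderiv_inl_BserInv, Aser_eq_varSeries,
    mapPowerSeries_pderiv_varSeries_self Sum.inl_injective]
  simp only [smul_eq_mul]
  ring

theorem mapPowerSeries_pderiv_inr (w : Fin r) (p k : ℕ) :
    (pderiv (Sum.inr w)).mapPowerSeries (PowerSeries.X ^ p * Aser n r * BserInv n r ^ (k + 1)) =
      (-(k + 1 : ℤ)) • (PowerSeries.X ^ (p + (r - w)) * Aser n r * BserInv n r ^ (k + 2)) := by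
  rw [Derivation.leibniz, Derivation.leibniz, Derivation.mapPowerSeries_X_pow,
    Derivation.leibniz_pow, mapPowerSeries_pderiv_inr_BserInv, Aser_eq_varSeries,
    mapPowerSeries_pderiv_varSeries_of_ne (fun _ => Sum.inl_ne_inr)]
  simp only [smul_eq_mul, nsmul_eq_mul, zsmul_eq_mul, add_tsub_cancel_right]
  push_cast
  ring

theorem pderiv_inl_coeff (w : Fin n) (p k m : ℕ) :
    pderiv (Sum.inl w)
        (PowerSeries.coeff m (PowerSeries.X ^ p * Aser n r * BserInv n r ^ (k + 1))) =
      PowerSeries.coeff m (PowerSeries.X ^ (p + (n - w)) * BserInv n r ^ (k + 1)) := by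
  rw [← Derivation.coeff_mapPowerSeries, mapPowerSeries_pderiv_inl]

theorem pderiv_inr_coeff (w : Fin r) (p k m : ℕ) :
    pderiv (Sum.inr w)
        (PowerSeries.coeff m (PowerSeries.X ^ p * Aser n r * BserInv n r ^ (k + 1))) =
      (-(k + 1 : ℤ)) •
        PowerSeries.coeff m (PowerSeries.X ^ (p + (r - w)) * Aser n r * BserInv n r ^ (k + 2)) := by
  rw [← Derivation.coeff_mapPowerSeries, mapPowerSeries_pderiv_inr, map_zsmul]

variable {d : Fin n → R n r}

theorem coeff_Dser_of_le (d : Fin n → R n r) {k : ℕ} (hk₁ : 1 ≤ k) (hk : k ≤ n) :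
    PowerSeries.coeff k (Dser n r d) = d ⟨n - k, by omega⟩ := by
  rw [Dser, coeff_ser, if_neg (by omega), if_pos hk, dif_pos ⟨hk₁, hk⟩]

theorem coeff_zero_Dser (d : Fin n → R n r) : PowerSeries.coeff 0 (Dser n r d) = 1 := by
  rw [Dser, coeff_ser, if_pos rfl]

theorem coeff_Dser_eq_coeff_Aser_mul_BserInv (hd : dSpec n r d) {k : ℕ} (hk : k ≤ n) :
    PowerSeries.coeff k (Dser n r d) = PowerSeries.coeff k (Aser n r * BserInv n r) := by
  have hBD := PowerSeries.coeff_mul_eq_of_coeff_eq (N := k) (fun i hi => hd i (by omega))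
    (BserInv n r)
  rwa [← mul_assoc, BserInv_mul_Bser, one_mul, mul_comm] at hBD

theorem d_eq_coeff (hd : dSpec n r d) (i : Fin n) :
    d i = PowerSeries.coeff n (PowerSeries.X ^ (i : ℕ) * Aser n r * BserInv n r ^ 1) := by
  have hi := i.isLt
  rw [pow_one, mul_assoc, PowerSeries.coeff_X_pow_mul', if_pos hi.le,
    ← coeff_Dser_eq_coeff_Aser_mul_BserInv hd (Nat.sub_le n i),
    coeff_Dser_of_le d (by omega) (Nat.sub_le n i)]
  exact congrArg d (Fin.ext (Nat.sub_sub_self hi.le).symm)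

theorem iterate_pderiv_pderiv_d (hr : 0 < r) (hrn : r ≤ n) (hd : dSpec n r d) (w : Fin r)
    (s : ℕ) :
    (fun q => pderiv (Sum.inr (⟨0, hr⟩ : Fin r)) q)^[s]
        (pderiv (Sum.inr w) (d ⟨r - 1, by omega⟩)) =
      ((-1) ^ (s + 1) * (s + 1).factorial : ℤ) •
        PowerSeries.coeff n
          (PowerSeries.X ^ ((s + 1) * r + (r - 1 - w)) * Aser n r * BserInv n r ^ (s + 2)) := by
  induction s with
  | zero =>
    have hw := w.isLt
    rw [Function.iterate_zero_apply, d_eq_coeff hd, pderiv_inr_coeff,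
      show r - 1 + (r - w) = (0 + 1) * r + (r - 1 - w) by omega]
    norm_num
  | succ s ih =>
    rw [Function.iterate_succ_apply', ih, map_zsmul, pderiv_inr_coeff, smul_smul,
      show (s + 1) * r + (r - 1 - w) + (r - 0) = (s + 1 + 1) * r + (r - 1 - w) by
        rw [Nat.sub_zero]; ring,
      Nat.factorial_succ (s + 1)]
    push_cast
    ring_nf

theorem psi_mul_add (hr : 0 < r) (hrn : r ≤ n) (hd : dSpec n r d) (s : ℕ) {i : ℕ}
    (hi : i < r) :
    psi n r hr hrn d (s * r + i) =
      ((-1) ^ s * s.factorial : ℤ) •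
        PowerSeries.coeff n (PowerSeries.X ^ (s * r + i) * Aser n r * BserInv n r ^ (s + 1)) := by
  cases s with
  | zero =>
    rw [psi, dif_pos (by omega), d_eq_coeff hd]
    simp
  | succ s =>
    have hdiv : ((s + 1) * r + i) / r - 1 = s := by
      rw [Nat.add_comm, Nat.add_mul_div_right _ _ hr, Nat.div_eq_of_lt hi]
      omega
    have hmod : ((s + 1) * r + i) % r = i := by
      rw [Nat.add_comm, Nat.add_mul_mod_self_right, Nat.mod_eq_of_lt hi]
    rw [psi, dif_neg (by nlinarith), hdiv, iterate_pderiv_pderiv_d hr hrn hd]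
    simp only [hmod, show r - 1 - (r - 1 - i) = i by omega]

theorem Lmat_pow_apply {m : ℕ} (k : ℕ) (l j : Fin m) :
    (Lmat n r m ^ k) l j = if (l : ℕ) = j + k then 1 else 0 := by
  induction k generalizing j with
  | zero => simp [Matrix.one_apply, Fin.ext_iff]
  | succ k ih =>
    rw [pow_succ, Matrix.mul_apply]
    simp only [ih]
    simp only [Lmat, Matrix.of_apply, mul_ite, mul_one, mul_zero]
    rw [Fin.sum_univ_eq_sum_range
      (fun c => if c = j + 1 then if (l : ℕ) = c + k then 1 else 0 else 0), Finset.sum_ite_eq']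
    simp only [Finset.mem_range]
    split_ifs <;> first | rfl | omega

theorem Dhat_apply (hn : 0 < n) (d : Fin n → R n r) (l j : Fin n) :
    Dhat n r hn d l j = if (j : ℕ) ≤ l then PowerSeries.coeff (l - j) (Dser n r d) else 0 := by
  have hl := l.isLt
  rw [Dhat, Matrix.add_apply, Matrix.sum_apply, Matrix.one_apply]
  simp only [Matrix.smul_apply, Lmat_pow_apply, smul_eq_mul, mul_ite, mul_one, mul_zero]
  rcases lt_trichotomy (j : ℕ) l with hjl | hjl | hjl
  · have hk : ∀ k, (l : ℕ) = j + (k + 1) ↔ k = l - j - 1 := fun k => by omega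
    simp only [hk, Finset.sum_ite_eq', Finset.mem_range]
    rw [if_neg (by omega), if_pos (by omega), if_pos hjl.le, zero_add,
      coeff_Dser_of_le d (by omega) (by omega)]
    exact congrArg d (Fin.ext (by simp only; omega))
  · rw [if_pos (Fin.ext hjl.symm), if_pos hjl.le, hjl, Nat.sub_self, coeff_zero_Dser,
      Finset.sum_eq_zero fun k _ => if_neg (by omega), add_zero]
  · rw [if_neg (by omega), if_neg (by omega), Finset.sum_eq_zero fun k _ => if_neg (by omega),
      add_zero]

theorem sum_coeff_X_pow_mul_mul_Dmat (hn : 0 < n) (hrn : r ≤ n) (hd : dSpec n r d)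
    (G : PowerSeries (R n r)) (j : Fin r) :
    ∑ l : Fin n,
        PowerSeries.coeff n (PowerSeries.X ^ ((l : ℕ) + 1) * G) * Dmat n r hn hrn d l j =
      PowerSeries.coeff n (PowerSeries.X ^ ((j : ℕ) + 1) * Aser n r * BserInv n r * G) := by
  have hj : (j : ℕ) ≤ n := by omega
  let c : ℕ → R n r := fun l =>
    if (j : ℕ) ≤ l then PowerSeries.coeff (l - j) (Dser n r d) else 0
  calc _ = ∑ l ∈ Finset.range n, c l * PowerSeries.coeff (n - l) (PowerSeries.X * G) := by
        rw [Finset.sum_range fun l => c l * PowerSeries.coeff (n - l) (PowerSeries.X * G)]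
        refine Finset.sum_congr rfl fun l _ => ?_
        rw [mul_comm, Dmat, Matrix.submatrix_apply, Dhat_apply, pow_succ, mul_assoc,
          PowerSeries.coeff_X_pow_mul', if_pos l.isLt.le]
        rfl
    _ = PowerSeries.coeff n (PowerSeries.X ^ (j : ℕ) * (Dser n r d * (PowerSeries.X * G))) := by
        rw [PowerSeries.coeff_X_pow_mul_mul_eq_sum _ _ hj, Finset.sum_range_succ, Nat.sub_self,
          PowerSeries.coeff_zero_X_mul, mul_zero, add_zero]
    _ = PowerSeries.coeff n
          (PowerSeries.X ^ (j : ℕ) * (Aser n r * BserInv n r * (PowerSeries.X * G))) := by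
        rw [PowerSeries.coeff_X_pow_mul', PowerSeries.coeff_X_pow_mul', mul_comm (Dser n r d),
          mul_comm (Aser n r * _), PowerSeries.coeff_mul_eq_of_coeff_eq
            (fun k hk => coeff_Dser_eq_coeff_Aser_mul_BserInv hd (by omega))]
    _ = _ := by ring_nf

end Series

/-- Lemma 3.5: for `0 ≤ s ≤ q_1-1`,
`(∂ψ_{sr+i}/∂b_{r-1-j}) = -(s+1) · (∂ψ_{sr+i}/∂a_{n-1-j}) · D`. -/
theorem stmt6 (n r q1 r1 : ℕ) (hq1 : 1 ≤ q1) (h1 : 0 < r1) (h2 : r1 < r)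
    (hn : n = q1 * r + r1)
    (d : Fin n → R n r) (hd : dSpec n r d) :
    ∀ s, s ≤ q1 - 1 →
      (Matrix.of fun i j : Fin r =>
          pderiv (Sum.inr (⟨r - 1 - (j : ℕ), by omega⟩ : Fin r))
            (psi n r (by omega) (rle q1 r r1 n (by omega) hn) d (s * r + (i : ℕ))))
        = (-((s : R n r) + 1)) •
          ((Matrix.of fun (i : Fin r) (j : Fin n) =>
              pderiv (Sum.inl (⟨n - 1 - (j : ℕ), by omega⟩ : Fin n))
                (psi n r (by omega) (rle q1 r r1 n (by omega) hn) d (s * r + (i : ℕ))))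
            * Dmat n r (by omega) (rle q1 r r1 n (by omega) hn) d) := by
  intro s _
  refine Matrix.ext fun i j => ?_
  have hj := j.isLt
  have hl : ∀ l : Fin n, n - (n - 1 - l) = l + 1 := fun l => by omega
  simp only [Matrix.of_apply, Matrix.smul_apply, Matrix.mul_apply, smul_eq_mul,
    psi_mul_add _ _ hd s i.isLt, map_zsmul, pderiv_inl_coeff, pderiv_inr_coeff, hl,
    show r - (r - 1 - j) = j + 1 by omega, smul_mul_assoc, ← Finset.smul_sum]
  have hterm : ∀ l : ℕ, PowerSeries.X ^ (s * r + i + (l + 1)) * BserInv n r ^ (s + 1) =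
      PowerSeries.X ^ (l + 1) * (PowerSeries.X ^ (s * r + i) * BserInv n r ^ (s + 1)) :=
    fun l => by ring
  have hA : PowerSeries.X ^ (s * r + i + (j + 1)) * Aser n r * BserInv n r ^ (s + 2) =
      PowerSeries.X ^ ((j : ℕ) + 1) * Aser n r * BserInv n r *
        (PowerSeries.X ^ (s * r + i) * BserInv n r ^ (s + 1)) := by ring
  rw [hA, ← sum_coeff_X_pow_mul_mul_Dmat (by omega) (rle q1 r r1 n (by omega) hn) hd]
  simp only [hterm, zsmul_eq_mul]
  push_cast
  ring

end TB
end
end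

section
/- For every 1 ≤ s ≤ q_1, the coefficients of t^i for all n−sr+1 ≤ i ≤ n+r in the power series (1 + b_{r-1}t + ⋯ + b_0 t^r)^{-s}·(1 + a_{n-1}t + ⋯ + a_0 t^n) ∈ R[[t]] all lie in the ideal of R generated by ψ_0,…,ψ_{sr-1}. -/
open MvPolynomial Matrix

noncomputable section

/-!
Since `B·D ≡ A (mod t^{n+1})`, the power series `B⁻¹A` agrees with `D` up to `t^n`, so `d_i` is
the coefficient of `t^{n-i}` in `B⁻¹A`. Differentiating coefficientwise, `∂B⁻¹/∂b_j = -t^{r-j}B⁻²`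
and `∂A/∂b_j = 0`, hence `∂^s(B⁻¹A)/(∂b_0^{s-1}∂b_{r-1-i}) = ±s!·t^{i+1+(s-1)r}·B^{-(s+1)}A`;
comparing coefficients of `t^{n-r+1}` shows that `ψ_{sr+i}` is a nonzero multiple of the
coefficient of `t^{n-sr-i}` in `B^{-(s+1)}A`. These are the lowest `r` coefficients in the range
claimed for `s+1`; the higher ones follow from the range claimed for `s` by induction on the
degree, reading `B·B^{-(s+1)}A = B^{-s}A` as a recursion (`B` has constant term `1` and degree `r`).
-/

namespace Derivation

section

variable {R A : Type*} [CommSemiring R] [CommSemiring A] [Algebra R A]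

def mapCoeffsPowerSeries (D : Derivation R A A) :
    Derivation R (PowerSeries A) (PowerSeries A) where
  toFun F := PowerSeries.mk fun k => D (PowerSeries.coeff k F)
  map_add' F G := by ext; simp
  map_smul' c F := by ext; simp
  map_one_eq_zero' := by
    ext k
    simp only [LinearMap.coe_mk, AddHom.coe_mk, PowerSeries.coeff_mk, PowerSeries.coeff_one]
    split_ifs <;> simp
  leibniz' F G := by
    ext k
    rw [smul_eq_mul, smul_eq_mul, mul_comm G]
    simp only [LinearMap.coe_mk, AddHom.coe_mk, PowerSeries.coeff_mk, PowerSeries.coeff_mul,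
      map_add, map_sum, leibniz, smul_eq_mul, Finset.sum_add_distrib]
    exact congrArg _ (Finset.sum_congr rfl fun _ _ => mul_comm _ _)

variable (D : Derivation R A A)

@[simp]
theorem coeff_mapCoeffsPowerSeries (F : PowerSeries A) (k : ℕ) :
    PowerSeries.coeff k (D.mapCoeffsPowerSeries F) = D (PowerSeries.coeff k F) :=
  PowerSeries.coeff_mk k fun k => D (PowerSeries.coeff k F)

theorem coeff_iterate_mapCoeffsPowerSeries (F : PowerSeries A) (k u : ℕ) :
    PowerSeries.coeff k (D.mapCoeffsPowerSeries^[u] F) = D^[u] (PowerSeries.coeff k F) := by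
  induction u with
  | zero => rfl
  | succ u ih => simp only [Function.iterate_succ_apply', coeff_mapCoeffsPowerSeries, ih]

@[simp]
theorem mapCoeffsPowerSeries_X_pow (e : ℕ) : D.mapCoeffsPowerSeries (PowerSeries.X ^ e) = 0 := by
  ext k
  rw [coeff_mapCoeffsPowerSeries, PowerSeries.coeff_X_pow]
  split_ifs <;> simp

end

section

variable {R S : Type*} [CommSemiring R] [CommRing S] [Algebra R S] (δ : Derivation R S S)
  {β y a : S}

theorem apply_pow_of_apply_eq_neg_mul_sq (hβ : δ β = -(y * β ^ 2)) (m : ℕ) :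
    δ (β ^ m) = -(m * (y * β ^ (m + 1))) := by
  induction m with
  | zero => simp
  | succ m ih =>
    rw [pow_succ, leibniz, ih, hβ, smul_eq_mul, smul_eq_mul]
    push_cast
    ring

theorem iterate_apply_pow_mul (hβ : δ β = -(y * β ^ 2)) (hy : δ y = 0) (ha : δ a = 0)
    (k u : ℕ) :
    δ^[u] (β ^ k * a) = ((-1) ^ u * k.ascFactorial u : ℤ) • (y ^ u * β ^ (k + u) * a) := by
  induction u with
  | zero => simp
  | succ u ih =>
    rw [Function.iterate_succ_apply', ih, map_zsmul]
    simp only [leibniz, leibniz_pow, hy, ha, δ.apply_pow_of_apply_eq_neg_mul_sq hβ, smul_eq_mul,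
      zsmul_eq_mul, Nat.ascFactorial_succ]
    push_cast
    ring

end

end Derivation

theorem Ideal.mem_of_zsmul_mem {S : Type*} [CommRing S] [Algebra ℚ S] (I : Ideal S) {c : ℤ}
    (hc : c ≠ 0) {x : S} (h : c • x ∈ I) : x ∈ I := by
  have := I.smul_of_tower_mem ((c : ℚ)⁻¹) h
  rwa [← Int.cast_smul_eq_zsmul ℚ, smul_smul, inv_mul_cancel₀ (by exact_mod_cast hc),
    one_smul] at this

namespace PowerSeries

variable {S : Type*} [CommRing S]

theorem coeff_mem_of_mul_eq {B G F : PowerSeries S} {r a b : ℕ} (J : Ideal S)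
    (hB0 : coeff 0 B = 1) (hB : ∀ j, r < j → coeff j B = 0) (hBG : B * G = F)
    (hF : ∀ m, a ≤ m → m ≤ b → coeff m F ∈ J) (hG : ∀ m, a - r ≤ m → m < a → coeff m G ∈ J) :
    ∀ m, a - r ≤ m → m ≤ b → coeff m G ∈ J := by
  intro m
  induction m using Nat.strong_induction_on with
  | _ m ih =>
    intro hm1 hm2
    by_cases hma : m < a
    · exact hG m hm1 hma
    have hFm : coeff m F =
        coeff m G + ∑ k ∈ Finset.range m, coeff (k + 1) B * coeff (m - (k + 1)) G := by
      rw [← hBG, coeff_mul, Finset.Nat.sum_antidiagonal_eq_sum_range_succ_mk,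
        Finset.sum_range_succ', hB0, one_mul, Nat.sub_zero, add_comm]
    have hsum : ∑ k ∈ Finset.range m, coeff (k + 1) B * coeff (m - (k + 1)) G ∈ J := by
      refine J.sum_mem fun k hk => ?_
      by_cases hkr : k + 1 ≤ r
      · exact J.mul_mem_left _ (ih _ (by simp at hk; omega) (by omega) (by omega))
      · rw [hB _ (by omega), zero_mul]
        exact J.zero_mem
    have := J.sub_mem (hF m (by omega) hm2) hsum
    rwa [hFm, add_sub_cancel_right] at this

end PowerSeries

namespace TB

open scoped Nat

section

variable {n r : ℕ}

lemma coeff_zero_Bser : PowerSeries.coeff 0 (Bser n r) = 1 := by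
  simp [Bser, ser]

lemma coeff_Bser_of_lt {k : ℕ} (hk : r < k) : PowerSeries.coeff k (Bser n r) = 0 := by
  simp [Bser, ser, show k ≠ 0 by omega, show ¬k ≤ r by omega]

lemma coeff_Aser_of_lt {k : ℕ} (hk : n < k) : PowerSeries.coeff k (Aser n r) = 0 := by
  simp [Aser, ser, show k ≠ 0 by omega, show ¬k ≤ n by omega]

lemma coeff_Dser (d : Fin n → R n r) {k : ℕ} (h1 : 1 ≤ k) (h2 : k ≤ n) :
    PowerSeries.coeff k (Dser n r d) = d ⟨n - k, by omega⟩ := by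
  simp [Dser, ser, show k ≠ 0 by omega, h1, h2]

lemma mapCoeffsPowerSeries_pderiv_Bser (j : Fin r) :
    (pderiv (Sum.inr j)).mapCoeffsPowerSeries (Bser n r) = PowerSeries.X ^ (r - j) := by
  refine PowerSeries.ext fun k => ?_
  simp only [Derivation.coeff_mapCoeffsPowerSeries, Bser, ser, PowerSeries.coeff_mk,
    PowerSeries.coeff_X_pow]
  split_ifs <;> simp [pderiv_X, Pi.single_apply, Fin.ext_iff] <;> omega

lemma mapCoeffsPowerSeries_pderiv_Aser (j : Fin r) :
    (pderiv (Sum.inr j)).mapCoeffsPowerSeries (Aser n r) = 0 := by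
  refine PowerSeries.ext fun k => ?_
  simp only [Derivation.coeff_mapCoeffsPowerSeries, Aser, ser, PowerSeries.coeff_mk]
  split_ifs <;> simp

variable {Binv : PowerSeries (R n r)} (hBinv : Bser n r * Binv = 1)
include hBinv

lemma mapCoeffsPowerSeries_pderiv_inv (j : Fin r) :
    (pderiv (Sum.inr j)).mapCoeffsPowerSeries Binv = -(PowerSeries.X ^ (r - j) * Binv ^ 2) := by
  rw [Derivation.leibniz_of_mul_eq_one _ (by rwa [mul_comm]), mapCoeffsPowerSeries_pderiv_Bser,
    smul_eq_mul, neg_mul, mul_comm]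

lemma coeff_inv_mul_Aser_eq_coeff_Dser {d : Fin n → R n r} (hd : dSpec n r d) {k : ℕ} (hk : k ≤ n) :
    PowerSeries.coeff k (Binv * Aser n r) = PowerSeries.coeff k (Dser n r d) := by
  have hD : Binv * (Bser n r * Dser n r d) = Dser n r d := by
    rw [← mul_assoc, mul_comm Binv, hBinv, one_mul]
  rw [← hD, PowerSeries.coeff_mul, PowerSeries.coeff_mul]
  refine Finset.sum_congr rfl fun p hp => ?_
  rw [hd p.2 (by have := Finset.HasAntidiagonal.mem_antidiagonal.mp hp; omega)]

lemma iterate_pderiv_inv_mul_Aser (hr : 0 < r) {i : ℕ} (hi : i < r) (u : ℕ) :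
    (pderiv (Sum.inr (⟨0, hr⟩ : Fin r))).mapCoeffsPowerSeries^[u]
        ((pderiv (Sum.inr (⟨r - 1 - i, by omega⟩ : Fin r))).mapCoeffsPowerSeries
          (Binv * Aser n r)) =
      ((-1) ^ (u + 1) * (u + 1)! : ℤ) •
        (PowerSeries.X ^ (i + 1 + u * r) * (Binv ^ (u + 2) * Aser n r)) := by
  set δ : Derivation ℂ (PowerSeries (R n r)) (PowerSeries (R n r)) :=
    (pderiv (Sum.inr (⟨0, hr⟩ : Fin r))).mapCoeffsPowerSeries
  have hfirst : (pderiv (Sum.inr (⟨r - 1 - i, by omega⟩ : Fin r))).mapCoeffsPowerSeries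
      (Binv * Aser n r) = Binv ^ 2 * -(PowerSeries.X ^ (i + 1) * Aser n r) := by
    rw [Derivation.leibniz, mapCoeffsPowerSeries_pderiv_Aser, mapCoeffsPowerSeries_pderiv_inv hBinv,
      show r - (r - 1 - i) = i + 1 by omega, smul_zero, zero_add, smul_eq_mul]
    ring
  have hδ : δ Binv = -(PowerSeries.X ^ r * Binv ^ 2) := by
    simpa using mapCoeffsPowerSeries_pderiv_inv hBinv (⟨0, hr⟩ : Fin r)
  have hconst : δ (-(PowerSeries.X ^ (i + 1) * Aser n r)) = 0 := by
    rw [map_neg, Derivation.leibniz, Derivation.mapCoeffsPowerSeries_X_pow,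
      mapCoeffsPowerSeries_pderiv_Aser, smul_zero, smul_zero, add_zero, neg_zero]
  have hasc : (2 : ℕ).ascFactorial u = (u + 1)! := by
    simpa [add_comm] using Nat.factorial_mul_ascFactorial 1 u
  rw [hfirst, δ.iterate_apply_pow_mul hδ (Derivation.mapCoeffsPowerSeries_X_pow _ r) hconst, hasc]
  simp only [zsmul_eq_mul]
  push_cast
  ring

variable {d : Fin n → R n r} (hd : dSpec n r d)
include hd

lemma psi_eq_coeff (hr : 0 < r) (hrn : r ≤ n) {i : ℕ} (hi : i < r) :
    psi n r hr hrn d i = PowerSeries.coeff (n - i) (Binv * Aser n r) := by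
  rw [psi, dif_pos hi, coeff_inv_mul_Aser_eq_coeff_Dser hBinv hd (by omega),
    coeff_Dser d (by omega) (by omega)]
  exact congrArg d (Fin.ext (by dsimp only; omega))

lemma psi_succ_mul_add (hr : 0 < r) (hrn : r ≤ n) {i : ℕ} (hi : i < r) {u : ℕ}
    (hu : (u + 2) * r ≤ n) :
    psi n r hr hrn d ((u + 1) * r + i) = ((-1) ^ (u + 1) * (u + 1)! : ℤ) •
      PowerSeries.coeff (n - (u + 1) * r - i) (Binv ^ (u + 2) * Aser n r) := by
  have e1 : (u + 1) * r = u * r + r := by ring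
  have e2 : (u + 2) * r = u * r + 2 * r := by ring
  have hdiv : ((u + 1) * r + i) / r = u + 1 := by
    rw [add_comm, mul_comm, Nat.add_mul_div_left _ _ hr, Nat.div_eq_of_lt hi, zero_add]
  have hmod : ((u + 1) * r + i) % r = i := by
    rw [add_comm, mul_comm, Nat.add_mul_mod_self_left, Nat.mod_eq_of_lt hi]
  have hdr : d ⟨r - 1, by omega⟩ = PowerSeries.coeff (n - r + 1) (Binv * Aser n r) := by
    rw [coeff_inv_mul_Aser_eq_coeff_Dser hBinv hd (by omega), coeff_Dser d (by omega) (by omega)]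
    exact congrArg d (Fin.ext (by dsimp only; omega))
  rw [psi, dif_neg (by omega)]
  simp only [hdiv, hmod, Nat.add_sub_cancel, hdr]
  rw [← Derivation.coeff_mapCoeffsPowerSeries, ← Derivation.coeff_iterate_mapCoeffsPowerSeries,
    iterate_pderiv_inv_mul_Aser hBinv hr hi, map_zsmul, PowerSeries.coeff_X_pow_mul',
    if_pos (by omega), show n - r + 1 - (i + 1 + u * r) = n - (u + 1) * r - i by omega]

lemma coeff_pow_mul_Aser_mem_of_psi_mem (hr : 0 < r) (hrn : r ≤ n) {s i : ℕ} (hi : i < r)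
    (hs : (s + 1) * r ≤ n) {J : Ideal (R n r)} (hψ : psi n r hr hrn d (s * r + i) ∈ J) :
    PowerSeries.coeff (n - s * r - i) (Binv ^ (s + 1) * Aser n r) ∈ J := by
  cases s with
  | zero =>
    rw [zero_mul, zero_add, psi_eq_coeff hBinv hd hr hrn hi] at hψ
    simpa using hψ
  | succ u =>
    rw [psi_succ_mul_add hBinv hd hr hrn hi hs] at hψ
    exact J.mem_of_zsmul_mem (by positivity) hψ

lemma coeff_pow_mul_Aser_mem (hr : 0 < r) (hrn : r ≤ n) {J : Ideal (R n r)} {s : ℕ}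
    (hs : s * r ≤ n) (hJ : ∀ m < s * r, psi n r hr hrn d m ∈ J) :
    ∀ m, n - s * r + 1 ≤ m → m ≤ n + r → PowerSeries.coeff m (Binv ^ s * Aser n r) ∈ J := by
  induction s with
  | zero =>
    intro m hm _
    rw [pow_zero, one_mul, coeff_Aser_of_lt (by omega)]
    exact J.zero_mem
  | succ s ih =>
    have e : (s + 1) * r = s * r + r := by ring
    have hstep : Bser n r * (Binv ^ (s + 1) * Aser n r) = Binv ^ s * Aser n r := by
      rw [pow_succ]
      linear_combination (Binv ^ s * Aser n r) * hBinv
    have hbottom : ∀ m, n - s * r + 1 - r ≤ m → m < n - s * r + 1 →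
        PowerSeries.coeff m (Binv ^ (s + 1) * Aser n r) ∈ J := by
      intro m hm1 hm2
      have := coeff_pow_mul_Aser_mem_of_psi_mem hBinv hd hr hrn (i := n - s * r - m) (by omega)
        hs (hJ _ (by omega))
      rwa [show n - s * r - (n - s * r - m) = m by omega] at this
    intro m hm1 hm2
    exact PowerSeries.coeff_mem_of_mul_eq J coeff_zero_Bser (fun _ => coeff_Bser_of_lt) hstep
      (ih (by omega) fun m hm => hJ m (by omega)) hbottom m (by omega) hm2

end

/-- Lemma 3.11: for `1 ≤ s ≤ q_1`, the coefficients of `t^i`,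
`n-sr+1 ≤ i ≤ n+r`, in `B^{-s}·A` all lie in `(ψ_0,…,ψ_{sr-1})`. -/
theorem stmt12 (n r q1 r1 : ℕ) (hq1 : 1 ≤ q1) (h2 : r1 < r)
    (hn : n = q1 * r + r1)
    (d : Fin n → R n r) (hd : dSpec n r d)
    (Binv : PowerSeries (R n r)) (hBinv : Bser n r * Binv = 1) :
    ∀ s, 1 ≤ s → s ≤ q1 → ∀ i, n - s * r + 1 ≤ i → i ≤ n + r →
      PowerSeries.coeff i (Binv ^ s * Aser n r) ∈
        Ideal.span (Set.range fun m : Fin (s * r) =>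
          psi n r (by omega) (rle q1 r r1 n (by omega) hn) d (m : ℕ)) := by
  intro s _ hsq
  have hsr : s * r ≤ n := by nlinarith
  exact coeff_pow_mul_Aser_mem hBinv hd _ _ hsr fun m hm => Ideal.subset_span ⟨⟨m, hm⟩, rfl⟩

end TB
end
end
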